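/- arXiv:1310.1891 — 4 statements merged into one kernel-verified Lean document; each statement's English description precedes it below -/
import Mathlib

section
/- Let q be a prime power, n, k positive integers, ε > 0, and c : 𝔽_q^k → 𝔽_q^n any map. Then for every subset Λ ⊆ 𝔽_q^k with |Λ| = L and every z ∈ 𝔽_q^n: Σ_{x∈Λ} agr(c(x), z) ≤ nL/q + (nL/(2ε)) · (1 + ε²) · (1 − 1/q) − (n/(2Lε)) · Σ_{(x,y) : x,y ∈ Λ, x ≠ y} d(c(x), c(y)), where the last sum ranges over ordered pairs of distinct elements of Λ. -/
open Finset

noncomputable section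

/-- `agr u v` is the number of coordinates on which `u` and `v` agree. -/
def agr {F : Type} [DecidableEq F] {n : ℕ} (u v : Fin n → F) : ℕ :=
  (Finset.univ.filter (fun j => u j = v j)).card

/-- `rdist u v` is the relative Hamming distance between `u` and `v`. -/
def rdist {F : Type} [DecidableEq F] {n : ℕ} (u v : Fin n → F) : ℝ :=
  ((Finset.univ.filter (fun j => u j ≠ v j)).card : ℝ) / n

/-!
Let `m j a` be the number of codewords with symbol `a` at coordinate `j`. Then the total
agreement with `z` is `A = ∑ j, m j (z j)`, the total agreement over ordered pairs of codewords
is `∑ j, ∑ a, m j a ^ 2`, and each row of `m` sums to `L`. Cauchy–Schwarz, once over the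
`q - 1` symbols different from `z j` and once over the `n` coordinates, bounds the pair count
from below by a quadratic in `A`. Completing the square around `A = n L / q` and AM–GM with
weight `ε` turn this into the linear bound.
-/

section Hamming

variable {F : Type} [DecidableEq F] {n : ℕ}

lemma natCast_agr_eq_sub_mul_rdist (u v : Fin n → F) :
    (agr u v : ℝ) = n - n * rdist u v := by
  have h := card_filter_add_card_filter_not (s := univ) (fun j => u j = v j)
  rw [card_univ, Fintype.card_fin] at h
  rcases n.eq_zero_or_pos with rfl | hn
  · simp [agr]
  · rw [rdist, mul_div_cancel₀ _ (by positivity), agr, eq_sub_iff_add_eq]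
    exact_mod_cast h

lemma rdist_self (u : Fin n → F) : rdist u u = 0 := by
  simp [rdist]

variable {ι : Type*}

def symbolCount (s : Finset ι) (w : ι → Fin n → F) (j : Fin n) (a : F) : ℕ :=
  #{x ∈ s | w x j = a}

lemma sum_symbolCount [Fintype F] (s : Finset ι) (w : ι → Fin n → F) (j : Fin n) :
    ∑ a, symbolCount s w j a = #s :=
  (card_eq_sum_card_fiberwise fun x _ => mem_coe.mpr (mem_univ (w x j))).symm

lemma sum_agr_eq_sum_symbolCount (s : Finset ι) (w : ι → Fin n → F) (z : Fin n → F) :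
    ∑ x ∈ s, agr (w x) z = ∑ j, symbolCount s w j (z j) :=
  sum_card_bipartiteAbove_eq_sum_card_bipartiteBelow (fun x j => w x j = z j)

lemma sum_sum_agr_eq_sum_sum_sq_symbolCount [Fintype F] (s : Finset ι) (w : ι → Fin n → F) :
    ∑ x ∈ s, ∑ y ∈ s, agr (w x) (w y) = ∑ j, ∑ a, symbolCount s w j a ^ 2 := by
  rw [sum_comm]
  simp_rw [sum_agr_eq_sum_symbolCount]
  rw [sum_comm]
  refine sum_congr rfl fun j _ => ?_
  rw [← sum_fiberwise' s (fun y => w y j)]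
  simp_rw [sum_const, smul_eq_mul, sq]
  rfl

lemma sum_sum_agr_eq_sub_sum_sum_rdist [DecidableEq ι] (s : Finset ι) (w : ι → Fin n → F) :
    ∑ x ∈ s, ∑ y ∈ s, (agr (w x) (w y) : ℝ)
      = n * #s ^ 2 - n * ∑ x ∈ s, ∑ y ∈ s.erase x, rdist (w x) (w y) := by
  simp_rw [natCast_agr_eq_sub_mul_rdist, sum_sub_distrib, ← mul_sum, sum_const, nsmul_eq_mul]
  rw [sum_congr rfl fun x _ => sum_erase s (rdist_self (w x))]
  ring

end Hamming

lemma sq_sum_sub_le_card_sub_one_mul {α : Type*} [Fintype α] [DecidableEq α]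
    (m : α → ℝ) (a : α) :
    (∑ b, m b - m a) ^ 2 ≤ (Fintype.card α - 1) * (∑ b, m b ^ 2 - m a ^ 2) := by
  have hcard : ((univ.erase a).card : ℝ) = Fintype.card α - 1 := by
    rw [card_erase_of_mem (mem_univ a), card_univ, Nat.cast_pred (Fintype.card_pos_iff.mpr ⟨a⟩)]
  have h := sq_sum_le_card_mul_sum_sq (s := univ.erase a) (f := m)
  rwa [hcard, sum_erase_eq_sub (mem_univ a), sum_erase_eq_sub (mem_univ a)] at h

lemma johnson_quadratic {ι α : Type*} [Fintype ι] [Fintype α] [DecidableEq α] [Nonempty α]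
    (m : ι → α → ℝ) (z : ι → α) (L : ℝ) (hrow : ∀ j, ∑ a, m j a = L) :
    (Fintype.card α - 1) * (∑ j, m j (z j)) ^ 2 + (Fintype.card ι * L - ∑ j, m j (z j)) ^ 2
      ≤ Fintype.card ι * (Fintype.card α - 1) * ∑ j, ∑ a, m j a ^ 2 := by
  have hq : (0 : ℝ) ≤ Fintype.card α - 1 := by
    rw [sub_nonneg, Nat.one_le_cast]; exact Fintype.card_pos
  have hrest : ∑ j, (L - m j (z j)) ^ 2 + (Fintype.card α - 1) * ∑ j, m j (z j) ^ 2
      ≤ (Fintype.card α - 1) * ∑ j, ∑ a, m j a ^ 2 := by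
    rw [mul_sum, mul_sum, ← sum_add_distrib]
    refine sum_le_sum fun j _ => ?_
    have h := sq_sum_sub_le_card_sub_one_mul (m j) (z j)
    rw [hrow] at h
    linarith
  have hcs₁ := sq_sum_le_card_mul_sum_sq (s := univ) (f := fun j => m j (z j))
  have hcs₂ := sq_sum_le_card_mul_sum_sq (s := univ) (f := fun j => L - m j (z j))
  rw [sum_sub_distrib, sum_const, nsmul_eq_mul] at hcs₂
  simp only [card_univ] at hcs₁ hcs₂
  nlinarith [mul_le_mul_of_nonneg_left hcs₁ hq]

lemma le_johnson_bound_of_quadratic {n L q A S ε : ℝ} (hn : 0 < n) (hL : 0 < L) (hq : 1 < q)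
    (hε : 0 < ε) (h : (q - 1) * A ^ 2 + (n * L - A) ^ 2 ≤ n * (q - 1) * (n * L ^ 2 - n * S)) :
    A ≤ n * L / q + n * L / (2 * ε) * (1 + ε ^ 2) * (1 - 1 / q) - n / (2 * L * ε) * S := by
  set θ := 1 - 1 / q with hθ
  have hθ_pos : 0 < θ := by rw [hθ, sub_pos, div_lt_one (by linarith)]; exact hq
  have hsq : (A - n * L / q) ^ 2 ≤ n ^ 2 * θ * (θ * L ^ 2 - S) := by
    have hq_pos : 0 < q := by linarith
    have hlhs : q * (A - n * L / q) ^ 2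
        = (q - 1) * A ^ 2 + (n * L - A) ^ 2 - n ^ 2 * L ^ 2 * θ := by
      rw [hθ]; field_simp; ring
    have hrhs : q * (n ^ 2 * θ * (θ * L ^ 2 - S))
        = n * (q - 1) * (n * L ^ 2 - n * S) - n ^ 2 * L ^ 2 * θ := by
      rw [hθ]; field_simp; ring
    nlinarith
  -- AM–GM `2 B M ≤ B ^ 2 + M ^ 2` for `B = A - n L / q`; the choice `M = ε n L θ`
  -- produces the factor `1 + ε ^ 2`.
  have amgm := two_mul_le_add_sq (A - n * L / q) (ε * n * L * θ)
  have hgap : n * L / q + n * L / (2 * ε) * (1 + ε ^ 2) * θ - n / (2 * L * ε) * S - A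
      = (n ^ 2 * θ * (θ * L ^ 2 - S) + (ε * n * L * θ) ^ 2
          - 2 * (A - n * L / q) * (ε * n * L * θ)) / (2 * ε * n * L * θ) := by
    field_simp; ring
  rw [← sub_nonneg, hgap]
  exact div_nonneg (by linarith) (by positivity)

theorem stmt_8_general
    {F : Type} [Field F] [Fintype F] [DecidableEq F]
    (q n k : ℕ) (hq : q = Fintype.card F)
    (ε : ℝ) (hε : 0 < ε)
    (c : (Fin k → F) → Fin n → F)
    (Λ : Finset (Fin k → F)) (L : ℕ) (hΛ : Λ.card = L)
    (z : Fin n → F) :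
    ∑ x ∈ Λ, (agr (c x) z : ℝ)
      ≤ n * L / q + (n * L / (2 * ε)) * (1 + ε ^ 2) * (1 - 1 / q)
        - (n / (2 * L * ε)) * ∑ x ∈ Λ, ∑ y ∈ Λ.erase x, rdist (c x) (c y) := by
  subst hq hΛ
  rcases n.eq_zero_or_pos with rfl | hn
  · simp [agr]
  rcases Λ.eq_empty_or_nonempty with rfl | hΛ
  · simp
  have hagr : ∑ x ∈ Λ, (agr (c x) z : ℝ) = ∑ j, (symbolCount Λ c j (z j) : ℝ) := by
    exact_mod_cast sum_agr_eq_sum_symbolCount Λ c z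
  have hpairs : ∑ x ∈ Λ, ∑ y ∈ Λ, (agr (c x) (c y) : ℝ)
      = ∑ j, ∑ a, (symbolCount Λ c j a : ℝ) ^ 2 := by
    exact_mod_cast sum_sum_agr_eq_sum_sum_sq_symbolCount Λ c
  have hquad := johnson_quadratic (fun j a => (symbolCount Λ c j a : ℝ)) z #Λ
    fun j => by exact_mod_cast sum_symbolCount Λ c j
  rw [Fintype.card_fin, ← hagr, ← hpairs, sum_sum_agr_eq_sub_sum_sum_rdist] at hquad
  exact le_johnson_bound_of_quadratic (by positivity) (by positivity)
    (by exact_mod_cast Fintype.one_lt_card) hε hquad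

/-- the average-radius variant of the q-ary Johnson bound
(Theorem A.1 of the paper).  The inner double sum ranges over ordered pairs
of distinct elements of `Λ`. -/
theorem stmt_8
    {F : Type} [Field F] [Fintype F] [DecidableEq F]
    (q n k : ℕ) (hq : q = Fintype.card F) (hn : 0 < n) (hk : 0 < k)
    (ε : ℝ) (hε : 0 < ε)
    (c : (Fin k → F) → Fin n → F)
    (Λ : Finset (Fin k → F)) (L : ℕ) (hΛ : Λ.card = L)
    (z : Fin n → F) :
    ∑ x ∈ Λ, (agr (c x) z : ℝ)
      ≤ n * L / q + (n * L / (2 * ε)) * (1 + ε ^ 2) * (1 - 1 / q)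
        - (n / (2 * L * ε)) * ∑ x ∈ Λ, ∑ y ∈ Λ.erase x, rdist (c x) (c y) :=
  stmt_8_general q n k hq ε hε c Λ L hΛ z
end
end

section
/- Let q be a prime power, n, k positive integers, and c : 𝔽_q^k → 𝔽_q^n any map. Then for every subset Λ ⊆ 𝔽_q^k with |Λ| = L and every z ∈ 𝔽_q^n: Σ_{x∈Λ} agr(c(x), z) ≤ (1/2) · ( n + √( n² + 4n²L(L−1) − 4n² · Σ_{(x,y) : x,y ∈ Λ, x ≠ y} d(c(x), c(y)) ) ), where the sum ranges over ordered pairs of distinct elements of Λ. -/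
open Finset

noncomputable section

/-!
Let `a j` be the number of codewords `c x`, `x ∈ Λ`, agreeing with `z` in coordinate `j`, so that
`S := ∑ x ∈ Λ, agr (c x) z = ∑ j, a j`. Codewords agreeing with `z` at `j` agree with each other
there, so `∑ j, a j * (a j - 1) ≤ A`, where `A` is the total pairwise agreement over ordered pairs of distinct
elements. With Cauchy–Schwarz, `S ^ 2 ≤ n * ∑ j, a j ^ 2 ≤ n * (A + S)`, and solving this quadratic
inequality in `S` gives the bound, since `n ^ 2 + 4 * n * A` is exactly the expression under the
square root.
-/

theorem Finset.sum_le_half_mul_add_sqrt_of_sum_sq_le {ι : Type*} (s : Finset ι) (a : ι → ℝ)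
    (A : ℝ) (h : ∑ i ∈ s, a i ^ 2 ≤ A + ∑ i ∈ s, a i) :
    ∑ i ∈ s, a i ≤ 1 / 2 * (#s + √((#s : ℝ) ^ 2 + 4 * #s * A)) := by
  have hcs := sq_sum_le_card_mul_sum_sq (s := s) (f := a)
  have hquad : (2 * ∑ i ∈ s, a i - #s) ^ 2 ≤ (#s : ℝ) ^ 2 + 4 * #s * A := by
    nlinarith [mul_le_mul_of_nonneg_left h (Nat.cast_nonneg (α := ℝ) #s)]
  linarith [Real.le_sqrt_of_sq_le hquad]

theorem Finset.card_filter_sq_le {α β : Type*} [DecidableEq α] [DecidableEq β] (s : Finset α)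
    (f : α → β) (b : β) :
    #{x ∈ s | f x = b} ^ 2 ≤ #{x ∈ s | f x = b} + ∑ x ∈ s, #{y ∈ s.erase x | f x = f y} := by
  set T := {x ∈ s | f x = b}
  have hsub : ∀ x ∈ T, T.erase x ⊆ {y ∈ s.erase x | f x = f y} := by
    intro x hx y hy
    simp only [T, mem_erase, mem_filter] at hx hy ⊢
    exact ⟨⟨hy.1, hy.2.1⟩, hx.2.trans hy.2.2.symm⟩
  calc #T ^ 2 = ∑ x ∈ T, (#(T.erase x) + 1) := by
        rw [sum_congr rfl fun x hx => card_erase_add_one hx, sum_const, smul_eq_mul, sq]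
    _ = #T + ∑ x ∈ T, #(T.erase x) := by
        rw [sum_add_distrib, sum_const, smul_eq_mul, add_comm, mul_one]
    _ ≤ #T + ∑ x ∈ T, #{y ∈ s.erase x | f x = f y} :=
        Nat.add_le_add_left (sum_le_sum fun x hx => card_le_card (hsub x hx)) _
    _ ≤ #T + ∑ x ∈ s, #{y ∈ s.erase x | f x = f y} := by
        gcongr
        exact filter_subset _ _

section Agreement

variable {F α : Type} [DecidableEq F] {n : ℕ}

theorem natCast_mul_rdist (u v : Fin n → F) : (n : ℝ) * rdist u v = n - agr u v := by
  have hsplit : #{j | u j ≠ v j} + agr u v = n := by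
    rw [agr, add_comm, card_filter_add_card_filter_not, card_univ, Fintype.card_fin]
  rcases n.eq_zero_or_pos with rfl | hn
  · simp [agr]
  · rw [rdist, mul_div_cancel₀ _ (by positivity), eq_sub_iff_add_eq]
    exact_mod_cast hsplit

theorem sum_agr_eq_sum_card_filter (s : Finset α) (v : α → Fin n → F) (z : Fin n → F) :
    ∑ x ∈ s, agr (v x) z = ∑ j, #{x ∈ s | v x j = z j} := by
  simp only [agr, card_filter]
  exact sum_comm

theorem sum_sum_erase_agr_eq [DecidableEq α] (s : Finset α) (v : α → Fin n → F) :
    ∑ x ∈ s, ∑ y ∈ s.erase x, agr (v x) (v y)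
      = ∑ j, ∑ x ∈ s, #{y ∈ s.erase x | v x j = v y j} := by
  simp only [agr, card_filter]
  rw [sum_comm]
  exact sum_congr rfl fun _ _ => sum_comm

theorem sum_card_filter_sq_le [DecidableEq α] (s : Finset α) (v : α → Fin n → F)
    (z : Fin n → F) :
    ∑ j, #{x ∈ s | v x j = z j} ^ 2
      ≤ ∑ x ∈ s, ∑ y ∈ s.erase x, agr (v x) (v y) + ∑ j, #{x ∈ s | v x j = z j} := by
  rw [sum_sum_erase_agr_eq, ← sum_add_distrib]
  exact sum_le_sum fun j _ => (s.card_filter_sq_le (v · j) (z j)).trans_eq (add_comm _ _)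

theorem sq_mul_sum_sum_erase_rdist [DecidableEq α] (s : Finset α) (v : α → Fin n → F) :
    (n : ℝ) ^ 2 * ∑ x ∈ s, ∑ y ∈ s.erase x, rdist (v x) (v y)
      = (n : ℝ) ^ 2 * #s * (#s - 1) - n * ∑ x ∈ s, ∑ y ∈ s.erase x, (agr (v x) (v y) : ℝ) := by
  have hrow : ∀ x ∈ s, ∑ y ∈ s.erase x, (n : ℝ) * rdist (v x) (v y)
      = (#s - 1) * n - ∑ y ∈ s.erase x, (agr (v x) (v y) : ℝ) := fun x hx => by
    simp only [natCast_mul_rdist, sum_sub_distrib, sum_const, nsmul_eq_mul,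
      cast_card_erase_of_mem hx]
  have hfactor : (n : ℝ) ^ 2 * ∑ x ∈ s, ∑ y ∈ s.erase x, rdist (v x) (v y)
      = n * ∑ x ∈ s, ∑ y ∈ s.erase x, (n : ℝ) * rdist (v x) (v y) := by
    simp_rw [mul_sum, sq, mul_assoc]
  rw [hfactor, sum_congr rfl hrow, sum_sub_distrib, sum_const, nsmul_eq_mul]
  ring

end Agreement

theorem stmt_9_general
    {F : Type} [DecidableEq F]
    (n k : ℕ)
    (c : (Fin k → F) → Fin n → F)
    (Λ : Finset (Fin k → F)) (L : ℕ) (hΛ : Λ.card = L)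
    (z : Fin n → F) :
    ∑ x ∈ Λ, (agr (c x) z : ℝ)
      ≤ (1 / 2) * ((n : ℝ) + Real.sqrt ((n : ℝ) ^ 2 + 4 * (n : ℝ) ^ 2 * L * (L - 1)
          - 4 * (n : ℝ) ^ 2 * ∑ x ∈ Λ, ∑ y ∈ Λ.erase x, rdist (c x) (c y))) := by
  subst hΛ
  have hbound := (univ : Finset (Fin n)).sum_le_half_mul_add_sqrt_of_sum_sq_le
    (fun j => (#{x ∈ Λ | c x j = z j} : ℝ))
    (∑ x ∈ Λ, ∑ y ∈ Λ.erase x, (agr (c x) (c y) : ℝ))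
    (by exact_mod_cast sum_card_filter_sq_le Λ c z)
  rw [card_univ, Fintype.card_fin] at hbound
  have hS : ∑ x ∈ Λ, (agr (c x) z : ℝ) = ∑ j, (#{x ∈ Λ | c x j = z j} : ℝ) := by
    exact_mod_cast sum_agr_eq_sum_card_filter Λ c z
  have hrad : (n : ℝ) ^ 2 + 4 * (n : ℝ) ^ 2 * #Λ * (#Λ - 1)
      - 4 * (n : ℝ) ^ 2 * ∑ x ∈ Λ, ∑ y ∈ Λ.erase x, rdist (c x) (c y)
      = (n : ℝ) ^ 2 + 4 * n * ∑ x ∈ Λ, ∑ y ∈ Λ.erase x, (agr (c x) (c y) : ℝ) := by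
    rw [mul_assoc 4 ((n : ℝ) ^ 2) (∑ x ∈ Λ, _), sq_mul_sum_sum_erase_rdist]
    ring
  rw [hS, hrad]
  exact hbound

/-- the second average-radius variant of the Johnson bound
(Theorem A.2 of the paper), following MacWilliams–Sloane.  The sum in the
square root ranges over ordered pairs of distinct elements of `Λ`. -/
theorem stmt_9
    {F : Type} [Field F] [Fintype F] [DecidableEq F]
    (n k : ℕ) (hn : 0 < n) (hk : 0 < k)
    (c : (Fin k → F) → Fin n → F)
    (Λ : Finset (Fin k → F)) (L : ℕ) (hΛ : Λ.card = L)
    (z : Fin n → F) :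
    ∑ x ∈ Λ, (agr (c x) z : ℝ)
      ≤ (1 / 2) * ((n : ℝ) + Real.sqrt ((n : ℝ) ^ 2 + 4 * (n : ℝ) ^ 2 * L * (L - 1)
          - 4 * (n : ℝ) ^ 2 * ∑ x ∈ Λ, ∑ y ∈ Λ.erase x, rdist (c x) (c y))) :=
  stmt_9_general n k c Λ L hΛ z
end
end

section
/- Let q be a prime power, n, k positive integers, 0 < ε ≤ 1, and c : 𝔽_q^k → 𝔽_q^n any map. Let Λ ⊆ 𝔽_q^k with |Λ| = L ≥ 2/ε², and suppose d(c(x), c(y)) ≥ 1 − 1/q − ε² for all distinct x, y ∈ Λ. Then for every z ∈ 𝔽_q^n: Σ_{x∈Λ} agr(c(x), z) ≤ nL·(1/q + (5/4)ε); equivalently, the average relative distance (1/L)·Σ_{x∈Λ} d(c(x), z) is at least 1 − 1/q − (5/4)ε. -/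
/-! Write `M_j(a)` for the number of codewords of `Λ` with the symbol `a` in coordinate `j`. The
total agreement with `z` is `∑_j M_j(z_j)`, and the total pairwise agreement
`∑_{x,y} agr(c x, c y)` is the second moment `∑_j ∑_a M_j(a)²`, which the distance hypothesis
bounds by `Ln + L(L-1)n(1/q + ε²)`. Centering at the mean `L/q` turns this into a variance bound,
and Cauchy–Schwarz over the `n` coordinates gives the average-radius Johnson bound
`∑_x agr(c x, z) ≤ n (L/q + √(L(L-1)ε² + L(1-1/q)))`. Since `ε²L ≥ 2`, the square root is at
most `√(3/2)·Lε ≤ (5/4)Lε`. -/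

open Finset

noncomputable section

lemma sum_le_sqrt_card_mul_sum_sq {ι : Type*} (s : Finset ι) (f : ι → ℝ) :
    ∑ i ∈ s, f i ≤ √(#s * ∑ i ∈ s, f i ^ 2) :=
  (le_abs_self _).trans (Real.abs_le_sqrt (sq_sum_le_card_mul_sum_sq ..))

lemma sum_sub_mean_sq {α : Type*} [Fintype α] [Nonempty α] (f : α → ℝ) :
    ∑ a, (f a - (∑ b, f b) / Fintype.card α) ^ 2
      = ∑ a, f a ^ 2 - (∑ a, f a) ^ 2 / Fintype.card α := by
  have hcard : (Fintype.card α : ℝ) ≠ 0 := by positivity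
  simp only [sub_sq, sum_add_distrib, sum_sub_distrib, ← sum_mul, ← mul_sum, sum_const,
    card_univ, nsmul_eq_mul]
  field_simp
  ring

section Agreement

variable {F : Type} [DecidableEq F] {n : ℕ}

lemma agr_comm (u v : Fin n → F) : agr u v = agr v u := by
  simp only [agr, eq_comm]

lemma agr_self (u : Fin n → F) : agr u u = n := by
  simp [agr]

lemma agr_eq_mul_one_sub_rdist (u v : Fin n → F) : (agr u v : ℝ) = n * (1 - rdist u v) := by
  rcases Nat.eq_zero_or_pos n with rfl | hn
  · simp [agr]
  have hsplit : agr u v + #{j | u j ≠ v j} = n := by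
    rw [agr, card_filter_add_card_filter_not, card_univ, Fintype.card_fin]
  have hsplit_real : (agr u v : ℝ) + #{j | u j ≠ v j} = n := by exact_mod_cast hsplit
  rw [rdist, mul_one_sub, mul_div_cancel₀ _ (by positivity)]
  linarith

end Agreement

section Codes

variable {F : Type} [DecidableEq F] {n : ℕ} {ι : Type*} (Λ : Finset ι) (c : ι → Fin n → F)

def colCount (j : Fin n) (a : F) : ℕ := #{x ∈ Λ | c x j = a}

lemma sum_agr_eq_sum_colCount (z : Fin n → F) :
    ∑ x ∈ Λ, agr (c x) z = ∑ j, colCount Λ c j (z j) := by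
  simp only [agr, colCount, card_filter]
  exact sum_comm

lemma sum_colCount [Fintype F] (j : Fin n) : ∑ a, colCount Λ c j a = #Λ :=
  (card_eq_sum_card_fiberwise fun x _ => mem_univ (c x j)).symm

lemma sum_sum_agr_eq_sum_sq_colCount [Fintype F] :
    ∑ x ∈ Λ, ∑ y ∈ Λ, agr (c x) (c y) = ∑ j, ∑ a, colCount Λ c j a ^ 2 := by
  have hcol (j : Fin n) : ∑ x ∈ Λ, colCount Λ c j (c x j) = ∑ a, colCount Λ c j a ^ 2 := by
    rw [← sum_fiberwise Λ (fun x => c x j)]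
    refine sum_congr rfl fun a _ => ?_
    rw [sum_congr rfl fun x hx => by rw [(mem_filter.mp hx).2], sum_const, smul_eq_mul, sq]
    rfl
  calc ∑ x ∈ Λ, ∑ y ∈ Λ, agr (c x) (c y) = ∑ x ∈ Λ, ∑ j, colCount Λ c j (c x j) :=
        sum_congr rfl fun x _ => by
          rw [← sum_agr_eq_sum_colCount]
          exact sum_congr rfl fun y _ => agr_comm _ _
    _ = ∑ j, ∑ a, colCount Λ c j a ^ 2 := by
        rw [sum_comm]
        exact sum_congr rfl fun j _ => hcol j

lemma sum_sum_agr_le (A : ℝ)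
    (hagr : ∀ x ∈ Λ, ∀ y ∈ Λ, x ≠ y → (agr (c x) (c y) : ℝ) ≤ A) :
    ∑ x ∈ Λ, ∑ y ∈ Λ, (agr (c x) (c y) : ℝ) ≤ #Λ * (n + (#Λ - 1) * A) := by
  classical
  calc ∑ x ∈ Λ, ∑ y ∈ Λ, (agr (c x) (c y) : ℝ) ≤ ∑ x ∈ Λ, (n + (#Λ - 1) * A : ℝ) :=
        sum_le_sum fun x hx => by
          have hoff := sum_le_card_nsmul (Λ.erase x) (fun y => (agr (c x) (c y) : ℝ)) A
            fun y hy => hagr x hx y (mem_of_mem_erase hy) (ne_of_mem_erase hy).symm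
          rw [nsmul_eq_mul, cast_card_erase_of_mem hx] at hoff
          rw [← add_sum_erase Λ _ hx, agr_self]
          linarith
    _ = #Λ * (n + (#Λ - 1) * A) := by rw [sum_const, nsmul_eq_mul]

theorem sum_agr_le_johnson [Fintype F] [Nonempty F] (δ : ℝ)
    (hdist : ∀ x ∈ Λ, ∀ y ∈ Λ, x ≠ y →
      1 - 1 / (Fintype.card F : ℝ) - δ ≤ rdist (c x) (c y)) (z : Fin n → F) :
    ∑ x ∈ Λ, (agr (c x) z : ℝ) ≤ n * (#Λ / Fintype.card F
      + √(#Λ * (#Λ - 1) * δ + #Λ * (1 - 1 / Fintype.card F))) := by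
  have hsum (j : Fin n) : ∑ a, (colCount Λ c j a : ℝ) = #Λ := by
    exact_mod_cast sum_colCount Λ c j
  have hmoment : ∑ j, ∑ a, (colCount Λ c j a : ℝ) ^ 2
      = ∑ x ∈ Λ, ∑ y ∈ Λ, (agr (c x) (c y) : ℝ) := by
    exact_mod_cast (sum_sum_agr_eq_sum_sq_colCount Λ c).symm
  have hcols : ∑ x ∈ Λ, (agr (c x) z : ℝ) = ∑ j, (colCount Λ c j (z j) : ℝ) := by
    exact_mod_cast sum_agr_eq_sum_colCount Λ c z
  set L : ℝ := (#Λ : ℝ)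
  set q : ℝ := (Fintype.card F : ℝ)
  set X := L * (L - 1) * δ + L * (1 - 1 / q)
  set M : Fin n → F → ℝ := fun j a => colCount Λ c j a
  have hagr : ∀ x ∈ Λ, ∀ y ∈ Λ, x ≠ y → (agr (c x) (c y) : ℝ) ≤ n * (1 / q + δ) :=
    fun x hx y hy hxy => by
      rw [agr_eq_mul_one_sub_rdist]
      exact mul_le_mul_of_nonneg_left (by linarith [hdist x hx y hy hxy]) n.cast_nonneg
  have hspread : ∑ j, ∑ a, (M j a - L / q) ^ 2 ≤ n * X := by
    have hcol (j : Fin n) : ∑ a, (M j a - L / q) ^ 2 = ∑ a, M j a ^ 2 - L ^ 2 / q := by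
      simpa only [M, q, hsum j] using sum_sub_mean_sq (M j)
    have hq : q ≠ 0 := by positivity
    rw [sum_congr rfl fun j _ => hcol j, sum_sub_distrib, hmoment, sum_const, card_univ,
      Fintype.card_fin, nsmul_eq_mul]
    calc _ ≤ L * (n + (L - 1) * (n * (1 / q + δ))) - n * (L ^ 2 / q) := by
          gcongr
          exact sum_sum_agr_le Λ c _ hagr
      _ = n * X := by simp only [X]; field_simp; ring
  have hdev : ∑ j, (M j (z j) - L / q) ≤ n * √X := by
    calc ∑ j, (M j (z j) - L / q) ≤ √(n * ∑ j, (M j (z j) - L / q) ^ 2) := by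
          simpa using sum_le_sqrt_card_mul_sum_sq univ fun j => M j (z j) - L / q
      _ ≤ √(n * (n * X)) := by
          gcongr
          exact (sum_le_sum fun j _ => single_le_sum (fun a _ => sq_nonneg (M j a - L / q))
            (mem_univ (z j))).trans hspread
      _ = n * √X := by
          rw [← mul_assoc, Real.sqrt_mul (by positivity),
            Real.sqrt_mul_self n.cast_nonneg]
  rw [hcols]
  rw [sum_sub_distrib, sum_const, card_univ, Fintype.card_fin, nsmul_eq_mul] at hdev
  linarith

end Codes

theorem stmt_10_general
    {F : Type} [Fintype F] [DecidableEq F]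
    (q n k : ℕ) (hq : q = Fintype.card F) (hn : 0 < n)
    (ε : ℝ) (hε0 : 0 < ε)
    (c : (Fin k → F) → Fin n → F)
    (Λ : Finset (Fin k → F)) (L : ℕ) (hΛ : Λ.card = L)
    (hL : 2 / ε ^ 2 ≤ (L : ℝ))
    (hdist : ∀ x ∈ Λ, ∀ y ∈ Λ, x ≠ y →
      1 - 1 / (q : ℝ) - ε ^ 2 ≤ rdist (c x) (c y)) :
    ∀ z : Fin n → F,
      (∑ x ∈ Λ, (agr (c x) z : ℝ)) ≤ n * L * (1 / q + (5 / 4) * ε) ∧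
      1 - 1 / (q : ℝ) - (5 / 4) * ε ≤ ((L : ℝ))⁻¹ * ∑ x ∈ Λ, rdist (c x) z := by
  intro z
  have : Nonempty F := ⟨z ⟨0, hn⟩⟩
  subst hq hΛ
  have hLε : 2 ≤ (#Λ : ℝ) * ε ^ 2 := (div_le_iff₀ (by positivity)).mp hL
  have hLpos : 0 < (#Λ : ℝ) := by nlinarith [sq_nonneg ε]
  have hroot : √(#Λ * (#Λ - 1) * ε ^ 2 + #Λ * (1 - 1 / Fintype.card F))
      ≤ 5 / 4 * #Λ * ε := by
    rw [Real.sqrt_le_left (by positivity)]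
    have : (0 : ℝ) ≤ #Λ * (1 / Fintype.card F) := by positivity
    nlinarith [mul_le_mul_of_nonneg_left hLε hLpos.le]
  have hagr : ∑ x ∈ Λ, (agr (c x) z : ℝ) ≤ n * #Λ * (1 / Fintype.card F + 5 / 4 * ε) :=
    calc ∑ x ∈ Λ, (agr (c x) z : ℝ)
        ≤ n * (#Λ / Fintype.card F + 5 / 4 * #Λ * ε) := by
          grw [sum_agr_le_johnson Λ c (ε ^ 2) hdist z, hroot]
      _ = n * #Λ * (1 / Fintype.card F + 5 / 4 * ε) := by ring
  refine ⟨hagr, ?_⟩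
  simp_rw [agr_eq_mul_one_sub_rdist, ← mul_sum, sum_sub_distrib, sum_const, nsmul_one,
    mul_assoc] at hagr
  have hmean := le_of_mul_le_mul_left hagr (by exact_mod_cast hn)
  rw [le_inv_mul_iff₀ hLpos]
  linarith

/-- the Remark after Theorem A.1 of the paper.  If all pairwise
distances among the `L ≥ 2/ε²` codewords of `Λ` are at least `1 - 1/q - ε²`,
then the total agreement with any `z` is at most `nL(1/q + (5/4)ε)`;
equivalently the average distance from `z` to `Λ` is at least
`1 - 1/q - (5/4)ε`. -/
theorem stmt_10
    {F : Type} [Field F] [Fintype F] [DecidableEq F]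
    (q n k : ℕ) (hq : q = Fintype.card F) (hn : 0 < n) (hk : 0 < k)
    (ε : ℝ) (hε0 : 0 < ε) (hε1 : ε ≤ 1)
    (c : (Fin k → F) → Fin n → F)
    (Λ : Finset (Fin k → F)) (L : ℕ) (hΛ : Λ.card = L)
    (hL : 2 / ε ^ 2 ≤ (L : ℝ))
    (hdist : ∀ x ∈ Λ, ∀ y ∈ Λ, x ≠ y →
      1 - 1 / (q : ℝ) - ε ^ 2 ≤ rdist (c x) (c y)) :
    ∀ z : Fin n → F,
      (∑ x ∈ Λ, (agr (c x) z : ℝ)) ≤ n * L * (1 / q + (5 / 4) * ε) ∧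
      1 - 1 / (q : ℝ) - (5 / 4) * ε ≤ ((L : ℝ))⁻¹ * ∑ x ∈ Λ, rdist (c x) z :=
  stmt_10_general q n k hq hn ε hε0 c Λ L hΛ hL hdist
end
end

section
/- There is an absolute constant C₅ such that the following holds. Let q be a prime power, n ≥ 1, and L ≥ 2 an integer. Let Λ be a finite nonempty set of vectors in 𝔽_q^n with |Λ| ≤ L, and let Λ' ⊆ Λ be a random subset obtained by including each element of Λ independently with probability 1/2. Then for every coordinate j ∈ {1,…,n}: 𝔼[ |Λ'| · |pl_j(Λ) − pl_j(Λ')| ] ≤ √( C₅ · |Λ| · log(L) · pl_j(Λ) ) and 𝔼[ |Λ'|² · (pl_j(Λ) − pl_j(Λ'))² ] ≤ C₅ · |Λ| · log(L) · pl_j(Λ). -/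
/-!
Write `M(S)` for the plurality count of `S` in coordinate `j` and `p = pl_j(Λ)`, so that
`|S|·(pl_j(Λ) - pl_j(S)) = G(S) := |S|·p - M(S)`. If `α` is a plurality value of `Λ`, then
`G(S) ≤ |S|·p - #{c ∈ S | c j = α}`, a sum of independent centred increments with total variance
at most `M(Λ)`, whose second moment is at most `M(Λ)/4`. Conversely `-G(S)` is the maximum over the
at most `L` values `β` seen in coordinate `j` of `#{c ∈ S | c j = β} - |S|·p`; each of these is
sub-Gaussian with variance proxy `M(Λ)` around a nonpositive mean (Hoeffding's lemma), so the
exponential-moment method bounds the second moment of the positive part of the maximum by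
`O(M(Λ) log L)`. As `M(Λ) = |Λ|·p` this is the second claim; the first follows by Cauchy–Schwarz.
-/

open Finset

noncomputable section

/-- The (fractional) plurality of coordinate `j` for a finite set `Λ` of
vectors: `pl_j(Λ) = (1/|Λ|)·max_α |{c ∈ Λ : c j = α}|`, with `pl_j(∅) = 0`. -/
def pl {F : Type} [Fintype F] [DecidableEq F] {n : ℕ}
    (Λ : Finset (Fin n → F)) (j : Fin n) : ℝ :=
  ((Λ.card : ℝ))⁻¹ *
    ((Finset.univ.sup (fun α : F => (Λ.filter (fun c => c j = α)).card) : ℕ) : ℝ)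

open Real

section PowersetAvg

variable {ι : Type*}

/-- The expectation over a uniformly random subset of `s`, i.e. over keeping each element of `s`
independently with probability `1/2`. -/
def powersetAvg (s : Finset ι) (f : Finset ι → ℝ) : ℝ :=
  ((2 : ℝ) ^ #s)⁻¹ * ∑ t ∈ s.powerset, f t

theorem powersetAvg_congr {s : Finset ι} {f g : Finset ι → ℝ} (h : ∀ t ⊆ s, f t = g t) :
    powersetAvg s f = powersetAvg s g := by
  rw [powersetAvg, sum_congr rfl fun t ht => h t (mem_powerset.1 ht), powersetAvg]

theorem powersetAvg_mono {s : Finset ι} {f g : Finset ι → ℝ} (h : ∀ t ⊆ s, f t ≤ g t) :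
    powersetAvg s f ≤ powersetAvg s g :=
  mul_le_mul_of_nonneg_left (sum_le_sum fun t ht => h t (mem_powerset.1 ht)) (by positivity)

theorem powersetAvg_add (s : Finset ι) (f g : Finset ι → ℝ) :
    powersetAvg s (fun t => f t + g t) = powersetAvg s f + powersetAvg s g := by
  simp only [powersetAvg, sum_add_distrib, mul_add]

theorem powersetAvg_mul_const (s : Finset ι) (f : Finset ι → ℝ) (c : ℝ) :
    powersetAvg s (fun t => f t * c) = powersetAvg s f * c := by
  simp only [powersetAvg, ← sum_mul, mul_assoc]

theorem powersetAvg_const_mul (s : Finset ι) (c : ℝ) (f : Finset ι → ℝ) :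
    powersetAvg s (fun t => c * f t) = c * powersetAvg s f := by
  simp only [powersetAvg, mul_sum]
  ring_nf

theorem powersetAvg_const (s : Finset ι) (c : ℝ) : powersetAvg s (fun _ => c) = c := by
  simp [powersetAvg, card_powerset]

theorem powersetAvg_sum {α : Type*} (s : Finset ι) (A : Finset α) (f : α → Finset ι → ℝ) :
    powersetAvg s (fun t => ∑ a ∈ A, f a t) = ∑ a ∈ A, powersetAvg s (f a) := by
  simp only [powersetAvg, sum_comm (s := s.powerset), mul_sum]

theorem powersetAvg_insert [DecidableEq ι] {a : ι} {s : Finset ι} (ha : a ∉ s)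
    (f : Finset ι → ℝ) :
    powersetAvg (insert a s) f
      = (powersetAvg s f + powersetAvg s (fun t => f (insert a t))) / 2 := by
  simp only [powersetAvg, sum_powerset_insert ha, card_insert_of_notMem ha, pow_succ]
  ring

theorem sq_powersetAvg_le (s : Finset ι) (f : Finset ι → ℝ) :
    powersetAvg s f ^ 2 ≤ powersetAvg s (fun t => f t ^ 2) := by
  have hN : (0 : ℝ) < 2 ^ #s := by positivity
  have := sq_sum_le_card_mul_sum_sq (s := s.powerset) (f := f)
  rw [card_powerset, Nat.cast_pow, Nat.cast_ofNat] at this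
  rw [powersetAvg, powersetAvg, mul_pow, inv_pow, sq (2 ^ #s : ℝ), mul_inv, mul_assoc]
  gcongr
  rwa [inv_mul_le_iff₀ hN]

theorem powersetAvg_le_sqrt_powersetAvg_sq (s : Finset ι) (f : Finset ι → ℝ) :
    powersetAvg s f ≤ √(powersetAvg s (fun t => f t ^ 2)) :=
  (le_abs_self _).trans (Real.abs_le_sqrt (sq_powersetAvg_le s f))

variable [DecidableEq ι]

theorem sum_insert_of_subset {a : ι} {s t : Finset ι} (ha : a ∉ s) (ht : t ⊆ s) (w : ι → ℝ) :
    ∑ c ∈ insert a t, w c = w a + ∑ c ∈ t, w c :=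
  sum_insert fun h => ha (ht h)

theorem powersetAvg_sum_eq (s : Finset ι) (w : ι → ℝ) :
    powersetAvg s (fun t => ∑ c ∈ t, w c) = (∑ c ∈ s, w c) / 2 := by
  induction s using Finset.induction_on with
  | empty => simp [powersetAvg]
  | insert a s ha ih =>
    rw [powersetAvg_insert ha, powersetAvg_congr fun t ht => sum_insert_of_subset ha ht w,
      powersetAvg_add, powersetAvg_const, ih, sum_insert ha]
    ring

theorem powersetAvg_sq_sum_eq (s : Finset ι) (w : ι → ℝ) :
    powersetAvg s (fun t => (∑ c ∈ t, w c) ^ 2)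
      = ((∑ c ∈ s, w c) ^ 2 + ∑ c ∈ s, w c ^ 2) / 4 := by
  induction s using Finset.induction_on with
  | empty => simp [powersetAvg]
  | insert a s ha ih =>
    have expand : ∀ t ⊆ s, (∑ c ∈ insert a t, w c) ^ 2
        = (w a ^ 2 + (∑ c ∈ t, w c) * (2 * w a)) + (∑ c ∈ t, w c) ^ 2 := by
      intro t ht
      rw [sum_insert_of_subset ha ht]
      ring
    rw [powersetAvg_insert ha, powersetAvg_congr expand, powersetAvg_add, powersetAvg_add,
      powersetAvg_const, powersetAvg_mul_const, powersetAvg_sum_eq, ih, sum_insert ha,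
      sum_insert ha]
    ring

/-- Hoeffding's lemma for a uniformly random subset. -/
theorem powersetAvg_exp_le (s : Finset ι) (w : ι → ℝ) :
    powersetAvg s (fun t => exp (∑ c ∈ t, w c - (∑ c ∈ s, w c) / 2))
      ≤ exp (∑ c ∈ s, w c ^ 2 / 8) := by
  induction s using Finset.induction_on with
  | empty => simp [powersetAvg]
  | insert a s ha ih =>
    set Z : Finset ι → ℝ := fun t => exp (∑ c ∈ t, w c - (∑ c ∈ s, w c) / 2)
    have h_out : ∀ t ⊆ s,
        exp (∑ c ∈ t, w c - (∑ c ∈ insert a s, w c) / 2) = Z t * exp (-(w a / 2)) := by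
      intro t _
      rw [sum_insert ha, ← exp_add]
      ring_nf
    have h_in : ∀ t ⊆ s,
        exp (∑ c ∈ insert a t, w c - (∑ c ∈ insert a s, w c) / 2) = Z t * exp (w a / 2) := by
      intro t ht
      rw [sum_insert ha, sum_insert_of_subset ha ht, ← exp_add]
      ring_nf
    have h_cosh : (exp (-(w a / 2)) + exp (w a / 2)) / 2 ≤ exp (w a ^ 2 / 8) := by
      rw [add_comm, ← cosh_eq]
      calc cosh (w a / 2) ≤ exp ((w a / 2) ^ 2 / 2) := cosh_le_exp_half_sq _
        _ = exp (w a ^ 2 / 8) := by ring_nf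
    rw [powersetAvg_insert ha, powersetAvg_congr h_out, powersetAvg_congr h_in,
      powersetAvg_mul_const, powersetAvg_mul_const, ← mul_add, mul_div_assoc, sum_insert ha,
      exp_add, mul_comm (exp _)]
    exact mul_le_mul ih h_cosh (by positivity) (exp_pos _).le

theorem sq_max_zero_le_add_mul_exp (z t₀ lam : ℝ) (hlam : 0 < lam) (ht₀ : 0 ≤ t₀) :
    max z 0 ^ 2 ≤ t₀ ^ 2 + (4 / lam ^ 2 + 2 * t₀ / lam) * exp (lam * (z - t₀)) := by
  rcases le_or_gt z t₀ with hz | hz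
  · have h_sq : max z 0 ^ 2 ≤ t₀ ^ 2 := pow_le_pow_left₀ (le_max_right _ _) (max_le hz ht₀) 2
    have h_exp : 0 ≤ (4 / lam ^ 2 + 2 * t₀ / lam) * exp (lam * (z - t₀)) := by positivity
    linarith
  · set u := lam * (z - t₀) with hu_def
    have hu : 0 ≤ u := mul_nonneg hlam.le (by linarith)
    have h_lin : u ≤ exp u := by linarith [add_one_le_exp u]
    have h_sq : u ^ 2 ≤ 4 * exp u := by
      have h_half : u / 2 ≤ exp (u / 2) := by linarith [add_one_le_exp (u / 2)]
      have h_exp_sq : exp (u / 2) ^ 2 = exp u := by rw [← exp_nat_mul]; ring_nf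
      nlinarith [pow_le_pow_left₀ (by positivity) h_half 2]
    have hz_eq : z = t₀ + u / lam := by rw [hu_def]; field_simp; ring
    rw [max_eq_left (by linarith), hz_eq]
    calc (t₀ + u / lam) ^ 2 = t₀ ^ 2 + (u ^ 2 / lam ^ 2 + 2 * t₀ / lam * u) := by ring
      _ ≤ t₀ ^ 2 + (4 * exp u / lam ^ 2 + 2 * t₀ / lam * exp u) := by gcongr
      _ = t₀ ^ 2 + (4 / lam ^ 2 + 2 * t₀ / lam) * exp u := by ring

theorem powersetAvg_sq_max_zero_le_of_exp {α : Type*} {s : Finset ι} {A : Finset α}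
    {w : α → ι → ℝ} {X : Finset ι → ℝ} {v : ℝ} (hw : ∀ a ∈ A, ∑ c ∈ s, w a c ^ 2 ≤ v)
    (hX : ∀ t ⊆ s, 0 < X t → ∃ a ∈ A, X t ≤ ∑ c ∈ t, w a c - (∑ c ∈ s, w a c) / 2)
    {lam t₀ : ℝ} (hlam : 0 < lam) (ht₀ : 0 ≤ t₀) :
    powersetAvg s (fun t => max (X t) 0 ^ 2)
      ≤ t₀ ^ 2 + (4 / lam ^ 2 + 2 * t₀ / lam) * (#A * exp (lam ^ 2 * v / 8 - lam * t₀)) := by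
  set κ := 4 / lam ^ 2 + 2 * t₀ / lam
  have hκ : 0 ≤ κ := by positivity
  set D : α → Finset ι → ℝ := fun a t => ∑ c ∈ t, w a c - (∑ c ∈ s, w a c) / 2
  have pointwise : ∀ t ⊆ s,
      max (X t) 0 ^ 2 ≤ t₀ ^ 2 + κ * ∑ a ∈ A, exp (lam * (D a t - t₀)) := by
    intro t ht
    have h_terms : ∀ a ∈ A, 0 ≤ exp (lam * (D a t - t₀)) := fun _ _ => (exp_pos _).le
    rcases le_or_gt (X t) 0 with hXt | hXt
    · rw [max_eq_right hXt]
      have := mul_nonneg hκ (sum_nonneg h_terms)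
      nlinarith
    · obtain ⟨a, ha, hXa⟩ := hX t ht hXt
      calc max (X t) 0 ^ 2 ≤ max (D a t) 0 ^ 2 :=
            pow_le_pow_left₀ (le_max_right _ _) (max_le_max_right 0 hXa) 2
        _ ≤ t₀ ^ 2 + κ * exp (lam * (D a t - t₀)) := sq_max_zero_le_add_mul_exp _ _ _ hlam ht₀
        _ ≤ t₀ ^ 2 + κ * ∑ a ∈ A, exp (lam * (D a t - t₀)) := by
            gcongr
            exact single_le_sum h_terms ha
  have mgf : ∀ a ∈ A, powersetAvg s (fun t => exp (lam * (D a t - t₀)))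
      ≤ exp (lam ^ 2 * v / 8 - lam * t₀) := by
    intro a ha
    have h_split : ∀ t ⊆ s, exp (lam * (D a t - t₀))
        = exp (∑ c ∈ t, lam * w a c - (∑ c ∈ s, lam * w a c) / 2) * exp (-(lam * t₀)) := by
      intro t _
      rw [← exp_add, ← mul_sum, ← mul_sum]
      congr 1
      simp only [D]
      ring
    rw [powersetAvg_congr h_split, powersetAvg_mul_const, sub_eq_add_neg, exp_add]
    gcongr
    calc _ ≤ exp (∑ c ∈ s, (lam * w a c) ^ 2 / 8) := powersetAvg_exp_le s _
      _ = exp (lam ^ 2 * (∑ c ∈ s, w a c ^ 2) / 8) := by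
          rw [mul_sum, sum_div]
          simp only [mul_pow]
      _ ≤ exp (lam ^ 2 * v / 8) := by
          gcongr
          exact hw a ha
  calc powersetAvg s (fun t => max (X t) 0 ^ 2)
      ≤ powersetAvg s (fun t => t₀ ^ 2 + κ * ∑ a ∈ A, exp (lam * (D a t - t₀))) :=
        powersetAvg_mono pointwise
    _ = t₀ ^ 2 + κ * ∑ a ∈ A, powersetAvg s (fun t => exp (lam * (D a t - t₀))) := by
        rw [powersetAvg_add, powersetAvg_const, powersetAvg_const_mul, powersetAvg_sum]
    _ ≤ t₀ ^ 2 + κ * ∑ _a ∈ A, exp (lam ^ 2 * v / 8 - lam * t₀) := by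
        gcongr with a ha
        exact mgf a ha
    _ = t₀ ^ 2 + κ * (#A * exp (lam ^ 2 * v / 8 - lam * t₀)) := by
        rw [sum_const, nsmul_eq_mul]

/-- Sub-Gaussian maximal inequality: the positive part of a quantity dominated by one of
`#A ≤ K` centred sums with variance proxy `v` has second moment `O(v log K)`. -/
theorem powersetAvg_sq_max_zero_le {α : Type*} {s : Finset ι} {A : Finset α}
    {w : α → ι → ℝ} {X : Finset ι → ℝ} {v K : ℝ} (hv : 0 < v) (hK : 1 < K)
    (hA : (#A : ℝ) ≤ K) (hw : ∀ a ∈ A, ∑ c ∈ s, w a c ^ 2 ≤ v)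
    (hX : ∀ t ⊆ s, 0 < X t → ∃ a ∈ A, X t ≤ ∑ c ∈ t, w a c - (∑ c ∈ s, w a c) / 2) :
    powersetAvg s (fun t => max (X t) 0 ^ 2) ≤ v / 2 * (log K + (log K)⁻¹ + 1) := by
  set R := log K
  have hR : 0 < R := log_pos hK
  set lam := √(8 * R / v)
  have hlam : 0 < lam := sqrt_pos.2 (by positivity)
  have hlam_sq : lam ^ 2 = 8 * R / v := sq_sqrt (by positivity)
  -- `lam` makes the variance term `lam² v / 8` equal to `R`, and `t₀ = 2R / lam` then
  -- leaves the factor `exp (-R) = 1 / K` that absorbs the union over `A`.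
  refine (powersetAvg_sq_max_zero_le_of_exp hw hX hlam (t₀ := 2 * R / lam)
    (by positivity)).trans ?_
  have h_exp : lam ^ 2 * v / 8 - lam * (2 * R / lam) = -R := by
    rw [hlam_sq]
    field_simp
    ring
  have h_card : #A * exp (-R) ≤ 1 := by
    rw [exp_neg, exp_log (by linarith), ← div_eq_mul_inv, div_le_one (by linarith)]
    exact hA
  calc _ = (2 * R / lam) ^ 2 + (4 / lam ^ 2 + 2 * (2 * R / lam) / lam) * (#A * exp (-R)) := by
        rw [h_exp]
    _ ≤ (2 * R / lam) ^ 2 + (4 / lam ^ 2 + 2 * (2 * R / lam) / lam) * 1 := by gcongr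
    _ = (4 * R ^ 2 + 4 + 4 * R) / lam ^ 2 := by
        field_simp
        ring
    _ = v / 2 * (R + R⁻¹ + 1) := by
        rw [hlam_sq]
        field_simp
        ring

end PowersetAvg

section Plurality

variable {F : Type} [DecidableEq F] {n : ℕ}

def coordCount (j : Fin n) (α : F) (S : Finset (Fin n → F)) : ℕ :=
  #(S.filter fun c => c j = α)

def pluralityCount [Fintype F] (j : Fin n) (S : Finset (Fin n → F)) : ℕ :=
  univ.sup fun α => coordCount j α S

theorem coordCount_le_pluralityCount [Fintype F] (j : Fin n) (α : F)
    (S : Finset (Fin n → F)) : coordCount j α S ≤ pluralityCount j S :=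
  le_sup (f := fun α => coordCount j α S) (mem_univ α)

theorem exists_coordCount_eq_pluralityCount [Fintype F] {j : Fin n} {S : Finset (Fin n → F)}
    (h : 0 < pluralityCount j S) :
    ∃ α ∈ S.image (· j), coordCount j α S = pluralityCount j S := by
  have h_univ : (univ : Finset F).Nonempty := by
    by_contra h_empty
    rw [not_nonempty_iff_eq_empty] at h_empty
    simp [pluralityCount, h_empty] at h
  obtain ⟨α, -, hα⟩ := exists_mem_eq_sup univ h_univ fun α => coordCount j α S
  obtain ⟨c, hc⟩ := card_pos.1 (hα ▸ h : 0 < coordCount j α S)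
  rw [mem_filter] at hc
  exact ⟨α, mem_image.2 ⟨c, hc⟩, hα.symm⟩

theorem card_mul_pl [Fintype F] (S : Finset (Fin n → F)) (j : Fin n) :
    (#S : ℝ) * pl S j = pluralityCount j S := by
  rcases S.eq_empty_or_nonempty with rfl | hS
  · have h_zero : pluralityCount j (∅ : Finset (Fin n → F)) = 0 :=
      Nat.le_zero.1 (Finset.sup_le fun α _ => by simp [coordCount])
    simp [h_zero]
  · rw [pl, ← mul_assoc, mul_inv_cancel₀ (by positivity), one_mul]
    rfl

theorem pl_nonneg [Fintype F] (S : Finset (Fin n → F)) (j : Fin n) : 0 ≤ pl S j := by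
  unfold pl
  positivity

theorem pl_le_one [Fintype F] (S : Finset (Fin n → F)) (j : Fin n) : pl S j ≤ 1 := by
  rcases S.eq_empty_or_nonempty with rfl | hS
  · simp [pl]
  · have h_le : pluralityCount j S ≤ #S := Finset.sup_le fun α _ => card_filter_le _ _
    have h_card : (0 : ℝ) < #S := by positivity
    rw [← mul_le_mul_iff_right₀ h_card, card_mul_pl, mul_one]
    exact_mod_cast h_le

theorem card_mul_pl_sub_pl [Fintype F] (Λ S : Finset (Fin n → F)) (j : Fin n) :
    (#S : ℝ) * (pl Λ j - pl S j) = #S * pl Λ j - pluralityCount j S := by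
  rw [mul_sub, card_mul_pl]

def centredIndicator [Fintype F] (Λ : Finset (Fin n → F)) (j : Fin n) (α : F)
    (c : Fin n → F) : ℝ :=
  (if c j = α then 1 else 0) - pl Λ j

variable [Fintype F]

theorem sum_centredIndicator (Λ S : Finset (Fin n → F)) (j : Fin n) (α : F) :
    ∑ c ∈ S, centredIndicator Λ j α c = coordCount j α S - #S * pl Λ j := by
  simp only [centredIndicator]
  rw [sum_sub_distrib, sum_boole, sum_const, nsmul_eq_mul]
  rfl

theorem sum_centredIndicator_self_nonpos (Λ : Finset (Fin n → F)) (j : Fin n) (α : F) :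
    ∑ c ∈ Λ, centredIndicator Λ j α c ≤ 0 := by
  rw [sum_centredIndicator, card_mul_pl, sub_nonpos]
  exact_mod_cast coordCount_le_pluralityCount j α Λ

theorem sum_sq_centredIndicator_le (Λ : Finset (Fin n → F)) (j : Fin n) (α : F) :
    ∑ c ∈ Λ, centredIndicator Λ j α c ^ 2 ≤ pluralityCount j Λ := by
  set p := pl Λ j
  have h_sq : ∀ c, centredIndicator Λ j α c ^ 2
      = (if c j = α then 1 else 0) * (1 - 2 * p) + p ^ 2 := by
    intro c
    simp only [centredIndicator, p]
    split_ifs <;> ring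
  have h_cnt : (coordCount j α Λ : ℝ) ≤ pluralityCount j Λ := by
    exact_mod_cast coordCount_le_pluralityCount j α Λ
  have h_M : (#Λ : ℝ) * p = pluralityCount j Λ := card_mul_pl Λ j
  rw [sum_congr rfl fun c _ => h_sq c, sum_add_distrib, ← sum_mul, sum_boole, sum_const,
    nsmul_eq_mul]
  change (coordCount j α Λ : ℝ) * (1 - 2 * p) + #Λ * p ^ 2 ≤ pluralityCount j Λ
  have hp0 := pl_nonneg Λ j
  have hp1 := pl_le_one Λ j
  have h_cnt0 : (0 : ℝ) ≤ coordCount j α Λ := Nat.cast_nonneg _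
  rcases le_or_gt p (1 / 2) with hp | hp
  · nlinarith
  · nlinarith

theorem exists_pluralityCount_sub_le {Λ S : Finset (Fin n → F)} (hS : S ⊆ Λ) (j : Fin n)
    (h : 0 < (pluralityCount j S : ℝ) - #S * pl Λ j) :
    ∃ α ∈ Λ.image (· j), (pluralityCount j S : ℝ) - #S * pl Λ j
      ≤ ∑ c ∈ S, centredIndicator Λ j α c - (∑ c ∈ Λ, centredIndicator Λ j α c) / 2 := by
  have h_pos : 0 < pluralityCount j S := by
    have := mul_nonneg (Nat.cast_nonneg (α := ℝ) #S) (pl_nonneg Λ j)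
    exact_mod_cast (by linarith : (0 : ℝ) < pluralityCount j S)
  obtain ⟨α, hα, h_eq⟩ := exists_coordCount_eq_pluralityCount h_pos
  refine ⟨α, image_subset_image hS hα, ?_⟩
  rw [sum_centredIndicator, ← h_eq]
  linarith [sum_centredIndicator_self_nonpos Λ j α]

theorem powersetAvg_sq_card_mul_pl_sub_le {Λ : Finset (Fin n → F)} (hΛ : Λ.Nonempty)
    (j : Fin n) {K : ℝ} (hK : 1 < K) (hcard : (#Λ : ℝ) ≤ K) :
    powersetAvg Λ (fun S => (#S : ℝ) ^ 2 * (pl Λ j - pl S j) ^ 2)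
      ≤ (pluralityCount j Λ : ℝ) * (3 / 4 + (log K + (log K)⁻¹) / 2) := by
  have h_pos : 0 < pluralityCount j Λ := by
    obtain ⟨c, hc⟩ := hΛ
    have h_cnt : 0 < coordCount j (c j) Λ := card_pos.2 ⟨c, mem_filter.2 ⟨hc, rfl⟩⟩
    exact h_cnt.trans_le (coordCount_le_pluralityCount j (c j) Λ)
  obtain ⟨α, -, hα⟩ := exists_coordCount_eq_pluralityCount h_pos
  set M : ℝ := (pluralityCount j Λ : ℝ)
  have hM : 0 < M := Nat.cast_pos.2 h_pos
  set G : Finset (Fin n → F) → ℝ := fun S => #S * pl Λ j - pluralityCount j S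
  set U : Finset (Fin n → F) → ℝ := fun S => ∑ c ∈ S, -centredIndicator Λ j α c
  have hGU : ∀ S, G S ≤ U S := by
    intro S
    simp only [G, U, sum_neg_distrib, sum_centredIndicator]
    linarith [(by exact_mod_cast coordCount_le_pluralityCount j α S :
      (coordCount j α S : ℝ) ≤ pluralityCount j S)]
  have h_split : ∀ S ⊆ Λ,
      (#S : ℝ) ^ 2 * (pl Λ j - pl S j) ^ 2 ≤ U S ^ 2 + max (-G S) 0 ^ 2 := by
    intro S _
    rw [← mul_pow, card_mul_pl_sub_pl]
    change G S ^ 2 ≤ _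
    rcases le_or_gt 0 (G S) with hG | hG
    · nlinarith [pow_le_pow_left₀ hG (hGU S) 2, sq_nonneg (max (-G S) 0)]
    · rw [max_eq_left (by linarith)]
      nlinarith [sq_nonneg (U S)]
  have h_upper : powersetAvg Λ (fun S => U S ^ 2) ≤ M / 4 := by
    have h_sum : ∑ c ∈ Λ, -centredIndicator Λ j α c = 0 := by
      rw [sum_neg_distrib, sum_centredIndicator, hα, card_mul_pl, sub_self, neg_zero]
    simp only [U]
    rw [powersetAvg_sq_sum_eq, h_sum]
    simp only [neg_sq]
    linarith [sum_sq_centredIndicator_le Λ j α]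
  have h_lower : powersetAvg Λ (fun S => max (-G S) 0 ^ 2)
      ≤ M / 2 * (log K + (log K)⁻¹ + 1) := by
    refine powersetAvg_sq_max_zero_le (A := Λ.image (· j)) hM hK ?_
      (fun a _ => sum_sq_centredIndicator_le Λ j a) fun S hS h => ?_
    · exact le_trans (by exact_mod_cast card_image_le) hcard
    · simp only [G, neg_sub] at h ⊢
      exact exists_pluralityCount_sub_le hS j h
  calc _ ≤ powersetAvg Λ (fun S => U S ^ 2 + max (-G S) 0 ^ 2) := powersetAvg_mono h_split
    _ ≤ M / 4 + M / 2 * (log K + (log K)⁻¹ + 1) := by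
        rw [powersetAvg_add]
        exact add_le_add h_upper h_lower
    _ = M * (3 / 4 + (log K + (log K)⁻¹) / 2) := by ring

end Plurality

theorem three_div_four_add_log_add_inv_div_two_le {L : ℝ} (hL : 2 ≤ L) :
    3 / 4 + (log L + (log L)⁻¹) / 2 ≤ 3 * logb 2 L := by
  have h_logb : 1 ≤ logb 2 L := by
    rw [le_logb_iff_rpow_le (by norm_num) (by linarith), rpow_one]
    exact hL
  have h_log : log L = logb 2 L * log 2 := by
    rw [logb, div_mul_cancel₀ _ (log_pos (by norm_num)).ne']
  have h_two_lo := log_two_gt_d9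
  have h_two_hi := log_two_lt_d9
  have h_ge : 1 / 2 ≤ log L := by rw [h_log]; nlinarith
  have h_le : log L ≤ logb 2 L := by rw [h_log]; nlinarith
  have h_inv : (log L)⁻¹ ≤ 2 := by
    rw [inv_le_comm₀ (by linarith) (by norm_num)]
    linarith
  linarith

/-- Lemma 6.2: if `Λ'` is a uniformly random half-density
subset of `Λ` (each element kept independently with probability 1/2, so the
expectation is the average over all `2^|Λ|` subsets), then for every
coordinate `j` the first and second moments of `|Λ'|·(pl_j(Λ) − pl_j(Λ'))`
are bounded by `√(C₅·|Λ|·log L·pl_j(Λ))` and `C₅·|Λ|·log L·pl_j(Λ)`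
respectively. -/
theorem stmt_11 :
    ∃ C₅ : ℝ, ∀ {F : Type} [Field F] [Fintype F] [DecidableEq F],
      ∀ n : ℕ, 1 ≤ n → ∀ L : ℕ, 2 ≤ L →
      ∀ Λ : Finset (Fin n → F), Λ.Nonempty → Λ.card ≤ L →
      ∀ j : Fin n,
        (((2 : ℝ) ^ Λ.card)⁻¹ *
            ∑ Λ' ∈ Λ.powerset, (Λ'.card : ℝ) * |pl Λ j - pl Λ' j|
          ≤ Real.sqrt (C₅ * Λ.card * Real.logb 2 L * pl Λ j)) ∧
        (((2 : ℝ) ^ Λ.card)⁻¹ *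
            ∑ Λ' ∈ Λ.powerset, (Λ'.card : ℝ) ^ 2 * (pl Λ j - pl Λ' j) ^ 2
          ≤ C₅ * Λ.card * Real.logb 2 L * pl Λ j) := by
  refine ⟨3, fun {F} _ _ _ n _ L hL Λ hΛ hcard j => ?_⟩
  have hL' : (2 : ℝ) ≤ L := by exact_mod_cast hL
  have h_second : powersetAvg Λ (fun S => (#S : ℝ) ^ 2 * (pl Λ j - pl S j) ^ 2)
      ≤ 3 * #Λ * logb 2 L * pl Λ j := by
    calc _ ≤ (pluralityCount j Λ : ℝ) * (3 / 4 + (log L + (log L)⁻¹) / 2) :=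
          powersetAvg_sq_card_mul_pl_sub_le hΛ j (by linarith) (by exact_mod_cast hcard)
      _ ≤ (pluralityCount j Λ : ℝ) * (3 * logb 2 L) := by
          gcongr
          exact three_div_four_add_log_add_inv_div_two_le hL'
      _ = 3 * #Λ * logb 2 L * pl Λ j := by
          rw [← card_mul_pl]
          ring
  refine ⟨?_, h_second⟩
  calc powersetAvg Λ (fun S => (#S : ℝ) * |pl Λ j - pl S j|)
      ≤ √(powersetAvg Λ (fun S => ((#S : ℝ) * |pl Λ j - pl S j|) ^ 2)) :=
        powersetAvg_le_sqrt_powersetAvg_sq _ _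
    _ = √(powersetAvg Λ (fun S => (#S : ℝ) ^ 2 * (pl Λ j - pl S j) ^ 2)) := by
        simp only [mul_pow, sq_abs]
    _ ≤ √(3 * #Λ * logb 2 L * pl Λ j) := sqrt_le_sqrt h_second
end
end
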